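/- Fix p with 1<p≤3. There exists a constant c>0 such that for all x,y∈ℝ and all ρ∈[0,1]: |n(x,ρ)| ≤ c·ρ·|x|²·⟨x⟩^{p−2}, |∂_x n(x,ρ)| ≤ c·ρ·|x|·⟨x⟩^{p−2}, and |n(x,ρ)−n(y,ρ)| ≤ c·ρ·|x−y|·(|x|⟨x⟩^{p−2}+|y|⟨y⟩^{p−2}). -/

import Mathlib

/- STATEMENT 13:
Fix p with 1<p≤3. There exists c>0 such that for all x,y∈ℝ and ρ∈[0,1]:
|n(x,ρ)| ≤ c·ρ·|x|²·⟨x⟩^{p−2},  |∂_x n(x,ρ)| ≤ c·ρ·|x|·⟨x⟩^{p−2},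
|n(x,ρ)−n(y,ρ)| ≤ c·ρ·|x−y|·(|x|⟨x⟩^{p−2}+|y|⟨y⟩^{p−2}),
where n(x,ρ)=ρ(|κ₀^{1/(p−1)}+x|^{p−1}(κ₀^{1/(p−1)}+x)−pκ₀x−κ₀^{p/(p−1)}),
κ₀=2(p+1)/(p−1)², ⟨x⟩=√(1+x²). -/

noncomputable section
open Real

/-- κ₀ = 2(p+1)/(p−1)². -/
def kap0 (p : ℝ) : ℝ := 2 * (p + 1) / (p - 1) ^ 2

/-- κ₀^{1/(p−1)}. -/
def cp (p : ℝ) : ℝ := kap0 p ^ (1 / (p - 1))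

/-- The nonlinearity n(x,ρ). -/
def nfun (p x ρ : ℝ) : ℝ :=
  ρ * (|cp p + x| ^ (p - 1) * (cp p + x) - p * kap0 p * x - kap0 p ^ (p / (p - 1)))

/-- The japanese bracket ⟨x⟩ = √(1+x²). -/
def jb (x : ℝ) : ℝ := Real.sqrt (1 + x ^ 2)

/-!
Write `a = κ₀^{1/(p-1)}` and `G v = |v|^{p-1} v`. Since `a^{p-1} = κ₀`, we have
`G a = κ₀^{p/(p-1)}` and `G' a = p κ₀`, so `n(·, ρ) = ρ (G (a + ·) - G a - G' a ·)` vanishes at `0`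
and has derivative `ρ p (|a + x|^{p-1} - a^{p-1})`. This is `O(|x|)` near `0` (the power is
Lipschitz near `a > 0`) and `O(|x|^{p-1})` at infinity, i.e. `O(|x| ⟨x⟩^{p-2})` everywhere.
Because `p - 2 ≥ -1`, the weight `|x| ⟨x⟩^{p-2}` is nondecreasing in `|x|` up to a factor `2`,
so the mean value theorem gives the difference bound, and `y = 0` gives the bound on `n`.
-/

open Set

theorem one_le_jb (x : ℝ) : 1 ≤ jb x := Real.one_le_sqrt.2 (by nlinarith)

theorem jb_pos (x : ℝ) : 0 < jb x := one_pos.trans_le (one_le_jb x)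

theorem abs_le_jb (x : ℝ) : |x| ≤ jb x := Real.abs_le_sqrt (by linarith)

theorem jb_le_one_add_abs (x : ℝ) : jb x ≤ 1 + |x| :=
  (Real.sqrt_le_left (by positivity)).2 (by nlinarith [sq_abs x, abs_nonneg x])

theorem jb_le_jb {s x : ℝ} (h : |s| ≤ |x|) : jb s ≤ jb x :=
  Real.sqrt_le_sqrt (by nlinarith [sq_le_sq.2 h])

theorem abs_mul_jb_rpow_nonneg (r x : ℝ) : 0 ≤ |x| * jb x ^ r :=
  mul_nonneg (abs_nonneg x) (Real.rpow_nonneg (jb_pos x).le r)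

theorem Real.rpow_le_rpow_abs_mul_rpow {b t L r : ℝ} (hb : 0 < b) (hbt : b ≤ t)
    (htL : t ≤ L * b) (hL : 1 ≤ L) : b ^ r ≤ L ^ |r| * t ^ r := by
  have ht : 0 < t := hb.trans_le hbt
  rcases le_or_gt 0 r with hr | hr
  · calc b ^ r ≤ t ^ r := rpow_le_rpow hb.le hbt hr
      _ ≤ L ^ |r| * t ^ r :=
        le_mul_of_one_le_left (rpow_nonneg ht.le r) (one_le_rpow hL (abs_nonneg r))
  · calc b ^ r ≤ (t / L) ^ r :=
          rpow_le_rpow_of_nonpos (by positivity) ((div_le_iff₀ (by positivity)).2 (by linarith))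
            hr.le
      _ = L ^ |r| * t ^ r := by
          rw [div_rpow ht.le (by positivity), abs_of_neg hr, rpow_neg (by positivity)]
          ring

theorem abs_mul_jb_rpow_le {r s x : ℝ} (hr : -1 ≤ r) (h : |s| ≤ |x|) :
    |s| * jb s ^ r ≤ 2 * (|x| * jb x ^ r) := by
  have hA := jb_pos s
  have hAB := jb_le_jb h
  rcases le_or_gt 0 r with hr0 | hr0
  · have := mul_le_mul h (Real.rpow_le_rpow hA.le hAB hr0) (by positivity) (abs_nonneg x)
    linarith [abs_mul_jb_rpow_nonneg r x]
  · have hratio : (jb x / jb s) ^ (-r) ≤ jb x / jb s := by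
      simpa using Real.rpow_le_rpow_of_exponent_le ((one_le_div hA).2 hAB) (by linarith : -r ≤ 1)
    have hcross : |s| * jb x ≤ 2 * |x| * jb s := by
      nlinarith [jb_le_one_add_abs x, one_le_jb s, abs_le_jb s, abs_nonneg s, abs_nonneg x]
    have hB := Real.rpow_pos_of_pos (jb_pos x) r
    rw [Real.div_rpow (jb_pos x).le hA.le, Real.rpow_neg hA.le, Real.rpow_neg (jb_pos x).le,
      div_inv_eq_mul, inv_mul_eq_div, div_le_div_iff₀ hB hA] at hratio
    refine le_of_mul_le_mul_right ?_ hA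
    nlinarith [mul_le_mul_of_nonneg_left hratio (abs_nonneg s),
      mul_le_mul_of_nonneg_right hcross hB.le]

theorem hasDerivAt_abs_rpow_mul_self {q : ℝ} (hq : 0 < q) (u : ℝ) :
    HasDerivAt (fun v : ℝ => |v| ^ q * v) ((q + 1) * |u| ^ q) u := by
  rcases eq_or_ne u 0 with rfl | hu
  · -- the difference quotient at `0` is `|v| ^ q`
    rw [hasDerivAt_iff_tendsto_slope_zero]
    have hcont : ContinuousAt (fun v : ℝ => |v| ^ q) 0 :=
      (Real.continuousAt_rpow_const _ _ (Or.inr hq.le)).comp continuous_abs.continuousAt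
    simp only [zero_add, abs_zero, Real.zero_rpow hq.ne', mul_zero, sub_zero, smul_eq_mul,
      ← div_eq_inv_mul]
    refine ((hcont.tendsto.mono_left nhdsWithin_le_nhds).congr' ?_).trans_eq ?_
    · filter_upwards [self_mem_nhdsWithin] with v hv
      rw [mul_div_cancel_right₀ _ hv]
    · simp [Real.zero_rpow hq.ne']
  · refine (((hasDerivAt_abs hu).rpow_const (p := q) (Or.inl (abs_ne_zero.2 hu))).mul
      (hasDerivAt_id' u)).congr_deriv ?_
    have hsign : (SignType.sign u : ℝ) * u = |u| := sign_mul_self u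
    rw [Real.rpow_sub_one (abs_ne_zero.2 hu)]
    field_simp
    linear_combination q * hsign

theorem Real.abs_rpow_sub_rpow_le_of_mem_Icc {q lo hi u v : ℝ} (hlo : 0 < lo)
    (hu : u ∈ Icc lo hi) (hv : v ∈ Icc lo hi) :
    |u ^ q - v ^ q| ≤ |q| * (lo ^ (q - 1) + hi ^ (q - 1)) * |u - v| := by
  have hderiv : ∀ t ∈ Icc lo hi,
      HasDerivWithinAt (fun t => t ^ q) (q * t ^ (q - 1)) (Icc lo hi) t :=
    fun t ht => (Real.hasDerivAt_rpow_const (Or.inl (hlo.trans_le ht.1).ne')).hasDerivWithinAt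
  have hbound : ∀ t ∈ Icc lo hi, ‖q * t ^ (q - 1)‖ ≤ |q| * (lo ^ (q - 1) + hi ^ (q - 1)) := by
    intro t ht
    have ht0 := hlo.trans_le ht.1
    have hlo' := Real.rpow_pos_of_pos hlo (q - 1)
    have hhi' := Real.rpow_pos_of_pos (ht0.trans_le ht.2) (q - 1)
    rw [Real.norm_eq_abs, abs_mul, abs_of_pos (Real.rpow_pos_of_pos ht0 _)]
    refine mul_le_mul_of_nonneg_left ?_ (abs_nonneg q)
    rcases le_total 0 (q - 1) with hq | hq
    · linarith [Real.rpow_le_rpow ht0.le ht.2 hq]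
    · linarith [Real.rpow_le_rpow_of_nonpos hlo ht.1 hq]
  simpa only [Real.norm_eq_abs] using
    (convex_Icc lo hi).norm_image_sub_le_of_norm_hasDerivWithin_le hderiv hbound hv hu

section

variable {q a : ℝ}

theorem abs_add_rpow_sub_rpow_le_of_abs_le (ha : 0 < a) {x : ℝ} (hx : |x| ≤ a / 2) :
    |(|a + x| ^ q - a ^ q)|
      ≤ |q| * ((a / 2) ^ (q - 1) + (3 * a / 2) ^ (q - 1)) * jb (a / 2) ^ |q - 1|
        * (|x| * jb x ^ (q - 1)) := by
  obtain ⟨hx₁, hx₂⟩ := abs_le.1 hx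
  have hlip := Real.abs_rpow_sub_rpow_le_of_mem_Icc (q := q) (by positivity : 0 < a / 2)
    (⟨by linarith, by linarith⟩ : a + x ∈ Icc (a / 2) (3 * a / 2))
    (⟨by linarith, by linarith⟩ : a ∈ Icc (a / 2) (3 * a / 2))
  rw [add_sub_cancel_left] at hlip
  have hone : 1 ≤ jb (a / 2) ^ |q - 1| * jb x ^ (q - 1) := by
    simpa using Real.rpow_le_rpow_abs_mul_rpow (r := q - 1) one_pos (one_le_jb x)
      (by simpa using jb_le_jb (by rwa [abs_of_pos (by positivity : 0 < a / 2)]))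
      (one_le_jb _)
  rw [abs_of_pos (by linarith : 0 < a + x)]
  calc _ ≤ _ := hlip
    _ ≤ _ := le_mul_of_one_le_right (by positivity) hone
    _ = _ := by ring

theorem abs_add_rpow_sub_rpow_le_of_le_abs (hq : 0 < q) (ha : 0 < a) {x : ℝ} (hx : a / 2 ≤ |x|) :
    |(|a + x| ^ q - a ^ q)| ≤ 3 ^ q * (1 + 2 / a) ^ |q - 1| * (|x| * jb x ^ (q - 1)) := by
  have hx0 : 0 < |x| := by linarith
  have hmax : |(|a + x| ^ q - a ^ q)| ≤ (3 * |x|) ^ q := by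
    have h3 : |a + x| ≤ 3 * |x| := by
      linarith [abs_add_le a x, abs_of_pos ha]
    exact abs_sub_le_of_nonneg_of_le (by positivity) (Real.rpow_le_rpow (abs_nonneg _) h3 hq.le)
      (Real.rpow_nonneg ha.le q) (Real.rpow_le_rpow ha.le (by linarith) hq.le)
  have hjb : jb x ≤ (1 + 2 / a) * |x| := by
    have : 1 ≤ 2 / a * |x| := by rw [div_mul_eq_mul_div, le_div_iff₀ ha]; linarith
    linarith [jb_le_one_add_abs x]
  have hcmp := Real.rpow_le_rpow_abs_mul_rpow (r := q - 1) hx0 (abs_le_jb x) hjb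
    (by linarith [div_pos two_pos ha])
  calc _ ≤ (3 * |x|) ^ q := hmax
    _ = 3 ^ q * |x| * |x| ^ (q - 1) := by
      rw [Real.mul_rpow (by norm_num) hx0.le, Real.rpow_sub_one hx0.ne']
      field_simp
    _ ≤ 3 ^ q * |x| * ((1 + 2 / a) ^ |q - 1| * jb x ^ (q - 1)) :=
      mul_le_mul_of_nonneg_left hcmp (by positivity)
    _ = _ := by ring

theorem exists_abs_add_rpow_sub_rpow_le (hq : 0 < q) (ha : 0 < a) :
    ∃ C > 0, ∀ x : ℝ, |(|a + x| ^ q - a ^ q)| ≤ C * (|x| * jb x ^ (q - 1)) := by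
  set C₁ := |q| * ((a / 2) ^ (q - 1) + (3 * a / 2) ^ (q - 1)) * jb (a / 2) ^ |q - 1|
  set C₂ := 3 ^ q * (1 + 2 / a) ^ |q - 1|
  have hC₁ : 0 ≤ C₁ := mul_nonneg (by positivity) (Real.rpow_nonneg (jb_pos _).le _)
  have hC₂ : 0 < C₂ := by positivity
  refine ⟨C₁ + C₂, by positivity, fun x => ?_⟩
  have hw := abs_mul_jb_rpow_nonneg (q - 1) x
  rcases le_total |x| (a / 2) with hx | hx
  · nlinarith [abs_add_rpow_sub_rpow_le_of_abs_le (q := q) ha hx]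
  · nlinarith [abs_add_rpow_sub_rpow_le_of_le_abs hq ha hx]

end

theorem abs_sub_le_of_abs_hasDerivAt_le {f f' : ℝ → ℝ} {K r : ℝ} (hK : 0 ≤ K) (hr : -1 ≤ r)
    (hf : ∀ t, HasDerivAt f (f' t) t) (hf' : ∀ t, |f' t| ≤ K * (|t| * jb t ^ r)) (x y : ℝ) :
    |f x - f y| ≤ 2 * K * |x - y| * (|x| * jb x ^ r + |y| * jb y ^ r) := by
  set m := max |x| |y|
  have hwx := abs_mul_jb_rpow_nonneg r x
  have hwy := abs_mul_jb_rpow_nonneg r y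
  have hbound : ∀ t ∈ Icc (-m) m, ‖f' t‖ ≤ 2 * K * (|x| * jb x ^ r + |y| * jb y ^ r) := by
    intro t ht
    have htm : |t| ≤ m := abs_le.2 ht
    have hw : |t| * jb t ^ r ≤ 2 * (|x| * jb x ^ r + |y| * jb y ^ r) := by
      rcases le_total |x| |y| with hxy | hxy
      · linarith [abs_mul_jb_rpow_le hr (htm.trans_eq (max_eq_right hxy))]
      · linarith [abs_mul_jb_rpow_le hr (htm.trans_eq (max_eq_left hxy))]
    rw [Real.norm_eq_abs]
    nlinarith [hf' t]
  have hmem : ∀ z, |z| ≤ m → z ∈ Icc (-m) m := fun z hz => abs_le.1 hz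
  simpa only [Real.norm_eq_abs, mul_comm (|x - y|), mul_right_comm _ |x - y|] using
    (convex_Icc (-m) m).norm_image_sub_le_of_norm_hasDerivWithin_le
      (fun t _ => (hf t).hasDerivWithinAt) hbound (hmem y (le_max_right _ _))
      (hmem x (le_max_left _ _))

section

variable {p : ℝ}

theorem kap0_pos (hp : 1 < p) : 0 < kap0 p := by
  unfold kap0
  have : 0 < p - 1 := by linarith
  positivity

theorem cp_pos (hp : 1 < p) : 0 < cp p := Real.rpow_pos_of_pos (kap0_pos hp) _

theorem cp_rpow_sub_one (hp : 1 < p) : cp p ^ (p - 1) = kap0 p := by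
  rw [cp, ← Real.rpow_mul (kap0_pos hp).le, one_div_mul_cancel (by linarith), Real.rpow_one]

theorem kap0_rpow_div (hp : 1 < p) : kap0 p ^ (p / (p - 1)) = cp p ^ p := by
  rw [cp, ← Real.rpow_mul (kap0_pos hp).le, one_div_mul_eq_div]

theorem nfun_zero (hp : 1 < p) (ρ : ℝ) : nfun p 0 ρ = 0 := by
  have hcp := cp_pos hp
  rw [nfun, add_zero, abs_of_pos hcp, kap0_rpow_div hp, ← Real.rpow_add_one hcp.ne',
    sub_add_cancel]
  ring

theorem hasDerivAt_nfun (hp : 1 < p) (ρ x : ℝ) :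
    HasDerivAt (fun z => nfun p z ρ) (ρ * p * (|cp p + x| ^ (p - 1) - cp p ^ (p - 1))) x := by
  have hG := (hasDerivAt_abs_rpow_mul_self (by linarith : 0 < p - 1) (cp p + x)).comp x
    ((hasDerivAt_id' x).const_add (cp p))
  refine ((((hG.sub ((hasDerivAt_id' x).const_mul (p * kap0 p))).sub_const
    (kap0 p ^ (p / (p - 1)))).const_mul ρ)).congr_deriv ?_
  rw [cp_rpow_sub_one hp]
  ring

end

theorem stmt13_general (p : ℝ) (hp1 : 1 < p) :
    ∃ c > 0, ∀ x y ρ : ℝ, ρ ∈ Set.Icc (0:ℝ) 1 →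
      |nfun p x ρ| ≤ c * ρ * |x| ^ 2 * jb x ^ (p - 2) ∧
      |deriv (fun z : ℝ => nfun p z ρ) x| ≤ c * ρ * |x| * jb x ^ (p - 2) ∧
      |nfun p x ρ - nfun p y ρ|
        ≤ c * ρ * |x - y| * (|x| * jb x ^ (p - 2) + |y| * jb y ^ (p - 2)) := by
  obtain ⟨C, hC, hkey⟩ := exists_abs_add_rpow_sub_rpow_le (sub_pos.2 hp1) (cp_pos hp1)
  have hp0 : 0 < p := by linarith
  refine ⟨2 * p * C, by positivity, fun x y ρ ⟨hρ, _⟩ => ?_⟩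
  have hderiv : ∀ t, |ρ * p * (|cp p + t| ^ (p - 1) - cp p ^ (p - 1))|
      ≤ ρ * p * C * (|t| * jb t ^ (p - 2)) := by
    intro t
    rw [abs_mul, abs_of_nonneg (by positivity), show p - 2 = p - 1 - 1 by ring, mul_assoc _ C]
    exact mul_le_mul_of_nonneg_left (hkey t) (by positivity)
  have hlip := abs_sub_le_of_abs_hasDerivAt_le (by positivity) (by linarith)
    (hasDerivAt_nfun hp1 ρ) hderiv
  refine ⟨?_, ?_, (hlip x y).trans_eq (by ring)⟩
  · have hx := hlip x 0
    simp only [nfun_zero hp1, sub_zero, abs_zero, zero_mul, add_zero] at hx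
    exact hx.trans_eq (by ring)
  · have hw : 0 ≤ ρ * p * C * (|x| * jb x ^ (p - 2)) :=
      mul_nonneg (by positivity) (abs_mul_jb_rpow_nonneg _ x)
    rw [(hasDerivAt_nfun hp1 ρ x).deriv]
    linarith [hderiv x]

theorem stmt13 (p : ℝ) (hp1 : 1 < p) (hp3 : p ≤ 3) :
    ∃ c > 0, ∀ x y ρ : ℝ, ρ ∈ Set.Icc (0:ℝ) 1 →
      |nfun p x ρ| ≤ c * ρ * |x| ^ 2 * jb x ^ (p - 2) ∧
      |deriv (fun z : ℝ => nfun p z ρ) x| ≤ c * ρ * |x| * jb x ^ (p - 2) ∧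
      |nfun p x ρ - nfun p y ρ|
        ≤ c * ρ * |x - y| * (|x| * jb x ^ (p - 2) + |y| * jb y ^ (p - 2)) :=
  stmt13_general p hp1
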